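/- arXiv:2509.05299 — 3 statements merged into one kernel-verified Lean document; each statement's English description precedes it below -/
import Mathlib

section
/- Transfer of the Krein–Milman property: Let (E, ≤, c) be an enriched qoset, let 𝒱 be a collection of subsets of E, and let s be the closure operator generated by 𝒱, s(A) = ⋂{V ∈ 𝒱 : A ⊆ V} (with s(A) = E if no member of 𝒱 contains A). Assume s absorbs ∼, i.e. [s(A)] = s(A) = s([A]) for all A. Let 𝒦 be a collection of subsets of E such that the collection {K \ V : K ∈ 𝒦, V ∈ 𝒱} has the c-KMp. Then 𝒦 has the (c*s)-KMp. -/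
/-- A preclosure operator on a set `E`: `A ⊆ c A` and `c` is monotone. -/
def IsPreclosure {E : Type*} (c : Set E → Set E) : Prop :=
  (∀ A : Set E, A ⊆ c A) ∧ ∀ ⦃A B : Set E⦄, A ⊆ B → c A ⊆ c B

/-- The convolution product of two preclosure operators. -/
def cnv {E : Type*} (c s : Set E → Set E) : Set E → Set E :=
  fun A => ⋂ B : Set E, c (A ∩ B) ∪ s (A \ B)

/-- The lower closure `↓A` of a subset of a qoset. -/
def dcl {E : Type*} [Preorder E] (A : Set E) : Set E := {x | ∃ a ∈ A, x ≤ a}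

/-- Order-equivalence `x ∼ y` in a qoset. -/
def eqv {E : Type*} [Preorder E] (x y : E) : Prop := x ≤ y ∧ y ≤ x

/-- The order-equivalence class `[x]` of `x`. -/
def cls {E : Type*} [Preorder E] (x : E) : Set E := {y | eqv y x}

/-- The order-saturation `[A]` of a subset `A`. -/
def clsSet {E : Type*} [Preorder E] (A : Set E) : Set E := {y | ∃ a ∈ A, eqv y a}

/-- The set of `t`-extreme points of `A`: points `x ∈ A` with `x ∉ t (A \ [x])`. -/
def exC {E : Type*} [Preorder E] (t : Set E → Set E) (A : Set E) : Set E :=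
  {x | x ∈ A ∧ x ∉ t (A \ cls x)}

/-- The closure operator generated by a collection `𝒱` of subsets:
the intersection of all members of `𝒱` containing `A` (`Set.univ` if none exists). -/
def sgen {E : Type*} (𝒱 : Set (Set E)) : Set E → Set E :=
  fun A => ⋂₀ {V : Set E | V ∈ 𝒱 ∧ A ⊆ V}

/-- `K` has the Krein–Milman property with respect to `t`. -/
def HasKMp {E : Type*} [Preorder E] (t : Set E → Set E) (K : Set E) : Prop :=
  t K = t (exC t K)

/-- Transfer of the Krein–Milman property: if `{K \ V : K ∈ 𝒦, V ∈ 𝒱}` has the `c`-KMp,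
where `s = ⟨·⟩_𝒱` absorbs `∼`, then `𝒦` has the `(c*s)`-KMp. -/
theorem transfer_of_KreinMilman {E : Type*} [Preorder E] (c : Set E → Set E)
    (hc : IsPreclosure c) (habs : ∀ A : Set E, dcl (c A) = c A)
    (𝒱 : Set (Set E))
    (hsabs : ∀ A : Set E, clsSet (sgen 𝒱 A) = sgen 𝒱 A ∧ sgen 𝒱 (clsSet A) = sgen 𝒱 A)
    (𝒦 : Set (Set E))
    (hKM : ∀ K ∈ 𝒦, ∀ V ∈ 𝒱, HasKMp c (K \ V)) :
    ∀ K ∈ 𝒦, HasKMp (cnv c (sgen 𝒱)) K := by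
  intro K hK
  set s := sgen 𝒱 with hs
  set t := cnv c s with ht
  have hsub : ∀ V ∈ 𝒱, ∀ {A : Set E}, A ⊆ V → s A ⊆ V := by
    intro V hV A hAV x hx
    exact hx V ⟨hV, hAV⟩
  have hsmono : ∀ ⦃A B : Set E⦄, A ⊆ B → s A ⊆ s B := by
    intro A B hAB x hx V hVm
    exact hx V ⟨hVm.1, hAB.trans hVm.2⟩
  have htmem : ∀ (A : Set E) (x : E), x ∈ t A ↔ ∀ B : Set E, x ∈ c (A ∩ B) ∪ s (A \ B) := by
    intro A x
    simp [ht, cnv, Set.mem_iInter]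
  have htmono : ∀ ⦃A B : Set E⦄, A ⊆ B → t A ⊆ t B := by
    intro A B hAB x hx
    rw [htmem] at hx ⊢
    intro C
    rcases hx C with h | h
    · exact Or.inl (hc.2 (Set.inter_subset_inter_left _ hAB) h)
    · exact Or.inr (hsmono (Set.diff_subset_diff_left hAB) h)
  -- key lemma: extreme points of `K \ V` for `c` are `t`-extreme points of `K`
  have key : ∀ V ∈ 𝒱, exC c (K \ V) ⊆ exC t K := by
    intro V hV x hx
    refine ⟨hx.1.1, fun hxt => ?_⟩
    rcases (htmem _ _).1 hxt Vᶜ with h | h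
    · apply hx.2
      have : (K \ cls x) ∩ Vᶜ = (K \ V) \ cls x := by ext y; simp; tauto
      rwa [this] at h
    · have hVx : (K \ cls x) \ Vᶜ ⊆ V := fun y hy => not_not.1 hy.2
      exact hx.1.2 (hsub V hV hVx h)
  -- the main statement
  apply Set.Subset.antisymm
  · intro x hx
    rw [htmem] at hx ⊢
    intro B
    by_cases hxs : x ∈ s (exC t K \ B)
    · exact Or.inr hxs
    · -- obtain a separating V
      simp only [hs, sgen, Set.mem_sInter] at hxs
      push_neg at hxs
      obtain ⟨V, ⟨hV, hVB⟩, hxV⟩ := hxs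
      left
      rcases hx Vᶜ with h | h
      · have hKV : K ∩ Vᶜ = K \ V := rfl
        rw [hKV, hKM K hK V hV] at h
        refine hc.2 ?_ h
        intro y hy
        refine ⟨key V hV hy, ?_⟩
        by_contra hyB
        exact hy.1.2 (hVB ⟨key V hV hy, hyB⟩)
      · exact absurd (hsub V hV (fun y hy => not_not.1 hy.2) h) hxV
  · exact htmono (fun x hx => hx.1)
end

section
/- Let (E, ≤, c) be an enriched qoset and let K = kit_c E. Then cp_c E ⊆ K ∩ ex_{c↑} E ⊆ ex_{c↑} K, and if c is idempotent and preinductive, all three sets are equal. Moreover, if c is distributive — i.e. x ∈ c(A) implies x ∈ c(↓x ∩ ↓A) for all x ∈ E and A ⊆ E — then cp_c E = ex_{c↑} E. -/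
/-- The upper closure `↑A` of a subset of a qoset. -/
def ucl {E : Type*} [Preorder E] (A : Set E) : Set E := {x | ∃ a ∈ A, a ≤ x}

/-- The set of `c`-compact points of `A`: points `x ∈ A` with `x ∉ c (A \ ↑x)`. -/
def cpC {E : Type*} [Preorder E] (c : Set E → Set E) (A : Set E) : Set E :=
  {x | x ∈ A ∧ x ∉ c (A \ Set.Ici x)}

/-- `V` is a `c`-copoint of `x`: a maximal `c`-closed subset not containing `x`. -/
def IsCopoint {E : Type*} (c : Set E → Set E) (x : E) (V : Set E) : Prop :=
  c V = V ∧ x ∉ V ∧ ∀ W : Set E, c W = W → x ∉ W → V ⊆ W → W = V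

/-- `c` is preinductive: every `c`-closed subset not containing `x` is contained in some
`c`-copoint of `x`. -/
def Preinductive {E : Type*} (c : Set E → Set E) : Prop :=
  ∀ (x : E) (V : Set E), c V = V → x ∉ V → ∃ W : Set E, V ⊆ W ∧ IsCopoint c x W

/-- The set of `c`-kit points: points all of whose `c`-copoints admit a `c`-compact
attaching point. -/
def kitC {E : Type*} [Preorder E] (c : Set E → Set E) : Set E :=
  {x | ∀ V : Set E, IsCopoint c x V → ∃ y ∈ cpC c Set.univ, IsCopoint c y V}


lemma cnv_mem_iff {E : Type*} [Preorder E] {c : Set E → Set E}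
    (hmono : ∀ ⦃A B : Set E⦄, A ⊆ B → c A ⊆ c B) {A : Set E} {x : E} :
    x ∈ cnv c ucl A ↔ x ∈ c (A ∩ Set.Iic x) := by
  constructor
  · intro h
    rcases Set.mem_iInter.mp h (Set.Iic x) with h | h
    · exact h
    · rcases h with ⟨a, ⟨haA, haB⟩, hax⟩
      exact absurd hax haB
  · intro h
    refine Set.mem_iInter.mpr fun B => ?_
    by_cases hB : x ∈ ucl (A \ B)
    · exact Or.inr hB
    · have hsub : A ∩ Set.Iic x ⊆ A ∩ B := by
        intro a ha
        refine ⟨ha.1, ?_⟩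
        by_contra hnB
        exact hB ⟨a, ⟨ha.1, hnB⟩, ha.2⟩
      exact Or.inl (hmono hsub h)

/-- With `K = kit_c E`: `cp_c E ⊆ K ∩ ex_{c↑} E ⊆ ex_{c↑} K`; the three sets are equal if
`c` is idempotent and preinductive; and `cp_c E = ex_{c↑} E` if `c` is distributive. -/
theorem compact_kit_extreme {E : Type*} [Preorder E] (c : Set E → Set E)
    (hc : IsPreclosure c) (habs : ∀ A : Set E, dcl (c A) = c A) :
    cpC c Set.univ ⊆ kitC c ∩ exC (cnv c ucl) Set.univ ∧
    kitC c ∩ exC (cnv c ucl) Set.univ ⊆ exC (cnv c ucl) (kitC c) ∧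
    ((∀ A : Set E, c (c A) = c A) → Preinductive c →
      (cpC c Set.univ = kitC c ∩ exC (cnv c ucl) Set.univ ∧
       cpC c Set.univ = exC (cnv c ucl) (kitC c))) ∧
    ((∀ (x : E) (A : Set E), x ∈ c A → x ∈ c (Set.Iic x ∩ dcl A)) →
      cpC c Set.univ = exC (cnv c ucl) Set.univ) := by
  obtain ⟨hext, hmono⟩ := hc
  -- closed sets (images of c) are down-sets
  have hdown : ∀ (A : Set E) {y z : E}, y ≤ z → z ∈ c A → y ∈ c A := by
    intro A y z hyz hz
    rw [← habs A]
    exact ⟨z, hz, hyz⟩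
  -- Part 1
  have p1 : cpC c Set.univ ⊆ kitC c ∩ exC (cnv c ucl) Set.univ := by
    intro x hx
    refine ⟨fun V hV => ⟨x, hx, hV⟩, trivial, fun hmem => hx.2 ?_⟩
    rw [cnv_mem_iff hmono] at hmem
    have hsub : (Set.univ \ cls x) ∩ Set.Iic x ⊆ Set.univ \ Set.Ici x := by
      intro a ha
      exact ⟨trivial, fun hxa => ha.1.2 ⟨ha.2, hxa⟩⟩
    exact hmono hsub hmem
  -- Part 2
  have p2 : kitC c ∩ exC (cnv c ucl) Set.univ ⊆ exC (cnv c ucl) (kitC c) := by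
    intro x hx
    refine ⟨hx.1, fun hmem => hx.2.2 ?_⟩
    rw [cnv_mem_iff hmono] at hmem ⊢
    have hsub : (kitC c \ cls x) ∩ Set.Iic x ⊆ (Set.univ \ cls x) ∩ Set.Iic x := by
      intro a ha
      exact ⟨⟨trivial, ha.1.2⟩, ha.2⟩
    exact hmono hsub hmem
  -- with idempotence and preinductivity, ex(K) ⊆ cp
  have p3 : (∀ A : Set E, c (c A) = c A) → Preinductive c →
      exC (cnv c ucl) (kitC c) ⊆ cpC c Set.univ := by
    intro hid hpre x hx
    obtain ⟨hxK, hxex⟩ := hx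
    rw [cnv_mem_iff hmono] at hxex
    refine ⟨trivial, fun hxc => ?_⟩
    obtain ⟨V, hDV, hVcl, hxV, hVmax⟩ := hpre x _ (hid _) hxex
    obtain ⟨y, hycp, hyVcl, hyV, hyVmax⟩ := hxK V ⟨hVcl, hxV, hVmax⟩
    -- V ⊆ univ \ Ici y, hence V = c (univ \ Ici y) by maximality
    have hVsub : V ⊆ Set.univ \ Set.Ici y := by
      intro v hv
      refine ⟨trivial, fun hyv => hyV ?_⟩
      rw [← hyVcl] at hv ⊢
      exact hdown V hyv hv
    have hVeq : c (Set.univ \ Set.Ici y) = V :=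
      hyVmax _ (hid _) hycp.2 (hVsub.trans (hext _))
    -- y ≤ x
    have hyx : y ≤ x := by
      by_contra hyx
      exact hxV (hVeq ▸ hext _ ⟨trivial, hyx⟩)
    -- y ∉ cls x
    have hycls : y ∉ cls x := by
      intro hy
      have hsub : Set.univ \ Set.Ici x ⊆ Set.univ \ Set.Ici y := by
        intro z hz
        exact ⟨trivial, fun hyz => hz.2 (hy.2.trans hyz)⟩
      exact hxV (hVeq ▸ hmono hsub hxc)
    exact hyV (hDV (hext _ ⟨⟨fun W hW => ⟨y, hycp, hW⟩, hycls⟩, hyx⟩))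
  refine ⟨p1, p2, fun hid hpre => ?_, fun hdist => ?_⟩
  · exact ⟨Set.Subset.antisymm p1 (fun x hx => p3 hid hpre (p2 hx)),
      Set.Subset.antisymm (fun x hx => p2 (p1 hx)) (p3 hid hpre)⟩
  · refine Set.Subset.antisymm (fun x hx => ((p1 hx).2)) ?_
    intro x hx
    refine ⟨trivial, fun hxc => hx.2 ?_⟩
    rw [cnv_mem_iff hmono]
    have hsub : Set.Iic x ∩ dcl (Set.univ \ Set.Ici x) ⊆ (Set.univ \ cls x) ∩ Set.Iic x := by
      intro a ha
      obtain ⟨hax, b, ⟨_, hxb⟩, hab⟩ := ha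
      exact ⟨⟨trivial, fun hacls => hxb (hacls.2.trans hab)⟩, hax⟩
    exact hmono hsub (hdist x _ hxc)
end

section
/- Representation Theorem III: Let (E, ≤, c) be an enriched qoset with c idempotent and preinductive, and let K = kit_c E. Then K is c↑-closed and K = c↑(ex_{c↑} K), i.e. K has the Krein–Milman property with respect to c↑. Moreover, for every x ∈ K there exists an antichain Y ⊆ cp_c E such that x ∈ c(Y) ∩ Y↑; any two such antichains Y, Z admit a bijection σ : Z → Y with z ∼ σ(z) for all z ∈ Z; and if c is finitary, every such antichain is finite. If in addition c separates points, then x ∈ Y^∨ for every such antichain Y, so that every x ∈ K is a supremum of ↓x ∩ cp_c E (kit_c E is sup-generated by the c-compact points). -/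
/-- A preclosure operator is finitary if the closure of a set is the union of the closures
of its finite subsets. -/
def Finitary {E : Type*} (c : Set E → Set E) : Prop :=
  ∀ A : Set E, c A = ⋃ (F : Set E) (_ : F ⊆ A ∧ F.Finite), c F

/-- `c` separates points: whenever `¬ x ≤ y`, some `c`-closed set contains `y` but not `x`. -/
def SepPoints {E : Type*} [Preorder E] (c : Set E → Set E) : Prop :=
  ∀ x y : E, ¬ x ≤ y → ∃ V : Set E, c V = V ∧ y ∈ V ∧ x ∉ V


section RTIII

variable {E : Type*} [Preorder E] {c : Set E → Set E}

lemma rtIII_mem_cnv (hc : IsPreclosure c) {A : Set E} {x : E} :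
    x ∈ cnv c ucl A ↔ x ∈ c (A ∩ Set.Iic x) := by
  constructor
  · intro h
    have h' := Set.mem_iInter.1 h (Set.Iic x)
    rcases h' with h' | h'
    · exact h'
    · obtain ⟨a, ⟨haA, hax⟩, hax'⟩ := h'
      exact absurd hax' hax
  · intro h
    refine Set.mem_iInter.2 fun B => ?_
    by_cases hsub : A ∩ Set.Iic x ⊆ B
    · have hsub2 : A ∩ Set.Iic x ⊆ A ∩ B := fun y hy => ⟨hy.1, hsub hy⟩
      exact Or.inl (hc.2 hsub2 h)
    · obtain ⟨a, ha, haB⟩ := Set.not_subset.1 hsub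
      exact Or.inr ⟨a, ⟨ha.1, haB⟩, ha.2⟩

lemma rtIII_down (habs : ∀ A : Set E, dcl (c A) = c A) {B : Set E} {y x : E}
    (h : y ≤ x) (hx : x ∈ c B) : y ∈ c B := by
  rw [← habs B]; exact ⟨x, hx, h⟩

lemma rtIII_closed_down (habs : ∀ A : Set E, dcl (c A) = c A) {V : Set E}
    (hV : c V = V) {y x : E} (h : y ≤ x) (hx : x ∈ V) : y ∈ V := by
  rw [← hV] at hx ⊢; exact rtIII_down habs h hx

lemma rtIII_cp_copoint (hc : IsPreclosure c) (habs : ∀ A : Set E, dcl (c A) = c A)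
    (hidem : ∀ A : Set E, c (c A) = c A) {y : E} (hy : y ∈ cpC c Set.univ) :
    IsCopoint c y (c (Set.univ \ Set.Ici y)) := by
  refine ⟨hidem _, hy.2, ?_⟩
  intro W hW hyW hsub
  have hWsub : W ⊆ Set.univ \ Set.Ici y := fun w hw =>
    ⟨trivial, fun hyw => hyW (rtIII_closed_down habs hW hyw hw)⟩
  exact Set.Subset.antisymm (fun w hw => hc.1 _ (hWsub hw)) hsub

lemma rtIII_copoint_eq (hc : IsPreclosure c) (habs : ∀ A : Set E, dcl (c A) = c A)
    (hidem : ∀ A : Set E, c (c A) = c A) {y : E} {V : Set E}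
    (hy : y ∈ cpC c Set.univ) (hV : IsCopoint c y V) :
    V = c (Set.univ \ Set.Ici y) := by
  have h1 : V ⊆ Set.univ \ Set.Ici y := fun v hv =>
    ⟨trivial, fun hyv => hV.2.1 (rtIII_closed_down habs hV.1 hyv hv)⟩
  exact (hV.2.2 (c (Set.univ \ Set.Ici y)) (hidem _) hy.2
    (fun v hv => hc.1 _ (h1 hv))).symm

lemma rtIII_find (hc : IsPreclosure c) (habs : ∀ A : Set E, dcl (c A) = c A)
    {z x : E} {A : Set E} (hz : z ∈ cpC c Set.univ) (hzx : z ≤ x)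
    (hx : x ∈ c A) : ∃ a ∈ A, z ≤ a := by
  by_contra h
  push_neg at h
  have hsub : A ⊆ Set.univ \ Set.Ici z := fun a ha => ⟨trivial, fun hza => h a ha hza⟩
  exact hz.2 (rtIII_down habs hzx (hc.2 hsub hx))

lemma rtIII_exists (hc : IsPreclosure c) (habs : ∀ A : Set E, dcl (c A) = c A)
    (hidem : ∀ A : Set E, c (c A) = c A) (hpre : Preinductive c)
    {x : E} (hx : x ∈ kitC c) :
    ∃ Y : Set E, Y ⊆ cpC c Set.univ ∧ IsAntichain (· ≤ ·) Y ∧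
      x ∈ c Y ∩ upperBounds Y := by
  classical
  let g : {V : Set E // IsCopoint c x V} → E := fun V => (hx V.1 V.2).choose
  have hgcp : ∀ V, g V ∈ cpC c Set.univ := fun V => (hx V.1 V.2).choose_spec.1
  have hgco : ∀ V, IsCopoint c (g V) V.1 := fun V => (hx V.1 V.2).choose_spec.2
  have hVeq : ∀ V, V.1 = c (Set.univ \ Set.Ici (g V)) :=
    fun V => rtIII_copoint_eq hc habs hidem (hgcp V) (hgco V)
  have hle : ∀ V, g V ≤ x := by
    intro V
    by_contra h
    have hmem : x ∈ c (Set.univ \ Set.Ici (g V)) := hc.1 _ ⟨Set.mem_univ x, h⟩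
    rw [← hVeq V] at hmem
    exact V.2.2.1 hmem
  have hginj : ∀ V W, g V ≤ g W → V = W := by
    intro V W hVW
    have hsub : V.1 ⊆ W.1 := by
      rw [hVeq V, hVeq W]
      exact hc.2 (fun z hz => ⟨trivial, fun hWz => hz.2 (hVW.trans hWz)⟩)
    exact Subtype.ext (V.2.2.2 W.1 W.2.1 W.2.2.1 hsub).symm
  refine ⟨Set.range g, ?_, ?_, ?_, ?_⟩
  · rintro y ⟨V, rfl⟩; exact hgcp V
  · rintro y ⟨V, rfl⟩ z ⟨W, rfl⟩ hne hle'
    exact hne (congrArg g (hginj V W hle'))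
  · by_contra hxc
    obtain ⟨W, hWsub, hW⟩ := hpre x (c (Set.range g)) (hidem _) hxc
    have hmem : g ⟨W, hW⟩ ∈ W := hWsub (hc.1 _ ⟨⟨W, hW⟩, rfl⟩)
    exact (hgco ⟨W, hW⟩).2.1 hmem
  · intro y hy
    obtain ⟨V, rfl⟩ := hy
    exact hle V

lemma rtIII_match (hc : IsPreclosure c) (habs : ∀ A : Set E, dcl (c A) = c A)
    {x : E} {Y Z : Set E} (hYcp : Y ⊆ cpC c Set.univ) (hZcp : Z ⊆ cpC c Set.univ)
    (hZa : IsAntichain (· ≤ ·) Z) (hxY : x ∈ c Y) (hxZ : x ∈ c Z)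
    (hubY : x ∈ upperBounds Y) (hubZ : x ∈ upperBounds Z) :
    ∀ z ∈ Z, ∃ y ∈ Y, eqv z y := by
  intro z hz
  obtain ⟨y, hy, hzy⟩ := rtIII_find hc habs (hZcp hz) (hubZ hz) hxY
  obtain ⟨z', hz', hyz'⟩ := rtIII_find hc habs (hYcp hy) (hubY hy) hxZ
  have hzz' : z = z' := by
    by_contra hne
    exact hZa hz hz' hne (hzy.trans hyz')
  subst hzz'
  exact ⟨y, hy, hzy, hyz'⟩

end RTIII

/-- Representation Theorem III: for an idempotent preinductive `c` on an enriched qoset,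
the set `K` of `c`-kit points is `c↑`-closed and has the `c↑`-Krein–Milman property;
every kit point `x` lies in `c(Y) ∩ Y↑` for an antichain `Y` of `c`-compact points,
unique up to order-equivalence, finite if `c` is finitary; and if `c` separates points,
`x` is a supremum of every such `Y` and of `↓x ∩ cp_c E`. -/
theorem representation_theorem_III {E : Type*} [Preorder E] (c : Set E → Set E)
    (hc : IsPreclosure c) (habs : ∀ A : Set E, dcl (c A) = c A)
    (hidem : ∀ A : Set E, c (c A) = c A) (hpre : Preinductive c) :
    cnv c ucl (kitC c) = kitC c ∧
    kitC c = cnv c ucl (exC (cnv c ucl) (kitC c)) ∧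
    ∀ x ∈ kitC c,
      (∃ Y : Set E, Y ⊆ cpC c Set.univ ∧ IsAntichain (· ≤ ·) Y ∧
        x ∈ c Y ∩ upperBounds Y) ∧
      (∀ Y Z : Set E,
        Y ⊆ cpC c Set.univ → IsAntichain (· ≤ ·) Y → x ∈ c Y ∩ upperBounds Y →
        Z ⊆ cpC c Set.univ → IsAntichain (· ≤ ·) Z → x ∈ c Z ∩ upperBounds Z →
        ∃ σ : Z → Y, Function.Bijective σ ∧ ∀ z : Z, eqv (z : E) ((σ z : Y) : E)) ∧
      (Finitary c → ∀ Y : Set E, Y ⊆ cpC c Set.univ → IsAntichain (· ≤ ·) Y →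
        x ∈ c Y ∩ upperBounds Y → Y.Finite) ∧
      (SepPoints c →
        (∀ Y : Set E, Y ⊆ cpC c Set.univ → IsAntichain (· ≤ ·) Y →
          x ∈ c Y ∩ upperBounds Y → IsLUB Y x) ∧
        IsLUB (Set.Iic x ∩ cpC c Set.univ) x) := by
  classical
  -- compact points are kit points
  have hcpK : cpC c Set.univ ⊆ kitC c := fun y hy V hV => ⟨y, hy, hV⟩
  -- compact points are extreme points of K
  have hcpEx : cpC c Set.univ ⊆ exC (cnv c ucl) (kitC c) := by
    intro y hy
    refine ⟨hcpK hy, ?_⟩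
    rw [rtIII_mem_cnv hc]
    intro hmem
    have hsub : (kitC c \ cls y) ∩ Set.Iic y ⊆ Set.univ \ Set.Ici y := by
      rintro z ⟨⟨hzK, hzc⟩, hzy⟩
      exact ⟨trivial, fun hyz => hzc ⟨hzy, hyz⟩⟩
    exact hy.2 (hc.2 hsub hmem)
  -- part 1 : t K = K
  have htK : cnv c ucl (kitC c) = kitC c := by
    apply Set.Subset.antisymm
    · intro x hx
      rw [rtIII_mem_cnv hc] at hx
      intro V hV
      have hk : ∃ k ∈ kitC c ∩ Set.Iic x, k ∉ V := by
        by_contra h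
        push_neg at h
        have : x ∈ V := by
          rw [← hV.1]
          exact hc.2 (fun k hk => h k hk) hx
        exact hV.2.1 this
      obtain ⟨k, ⟨hkK, hkx⟩, hkV⟩ := hk
      have hVk : IsCopoint c k V :=
        ⟨hV.1, hkV, fun W hW hkW hVW =>
          hV.2.2 W hW (fun hxW => hkW (rtIII_closed_down habs hW hkx hxW)) hVW⟩
      exact hkK V hVk
    · intro x hx
      rw [rtIII_mem_cnv hc]
      exact hc.1 _ ⟨hx, le_refl x⟩
  refine ⟨htK, ?_, ?_⟩
  · -- part 2 : K = t (ex t K)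
    apply Set.Subset.antisymm
    · intro x hx
      obtain ⟨Y, hYcp, hYa, hxc, hxub⟩ := rtIII_exists hc habs hidem hpre hx
      rw [rtIII_mem_cnv hc]
      have hsub : Y ⊆ exC (cnv c ucl) (kitC c) ∩ Set.Iic x :=
        fun y hy => ⟨hcpEx (hYcp hy), hxub hy⟩
      exact hc.2 hsub hxc
    · intro x hx
      rw [rtIII_mem_cnv hc] at hx
      rw [← htK, rtIII_mem_cnv hc]
      have hsub : exC (cnv c ucl) (kitC c) ∩ Set.Iic x ⊆ kitC c ∩ Set.Iic x :=
        fun y hy => ⟨hy.1.1, hy.2⟩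
      exact hc.2 hsub hx
  · intro x hx
    refine ⟨rtIII_exists hc habs hidem hpre hx, ?_, ?_, ?_⟩
    · -- bijection up to eqv
      intro Y Z hYcp hYa hxY hZcp hZa hxZ
      have hZY : ∀ z ∈ Z, ∃ y ∈ Y, eqv z y :=
        rtIII_match hc habs hYcp hZcp hZa hxY.1 hxZ.1 hxY.2 hxZ.2
      have hYZ : ∀ y ∈ Y, ∃ z ∈ Z, eqv y z :=
        rtIII_match hc habs hZcp hYcp hYa hxZ.1 hxY.1 hxZ.2 hxY.2
      choose f hf1 hf2 using hZY
      refine ⟨fun z => ⟨f z z.2, hf1 z z.2⟩, ⟨?_, ?_⟩, fun z => hf2 z z.2⟩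
      · intro z1 z2 heq
        have hy : f (z1 : E) z1.2 = f (z2 : E) z2.2 := congrArg Subtype.val heq
        have h1 := hf2 z1 z1.2
        have h2 := hf2 z2 z2.2
        rw [hy] at h1
        apply Subtype.ext
        by_contra hne
        exact hZa z1.2 z2.2 hne (h1.1.trans h2.2)
      · intro y
        obtain ⟨z, hz, hyz⟩ := hYZ y y.2
        refine ⟨⟨z, hz⟩, ?_⟩
        apply Subtype.ext
        show f z hz = (y : E)
        have h1 := hf2 z hz
        by_contra hne
        exact hYa (hf1 z hz) y.2 hne (h1.2.trans hyz.2)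
    · -- finitary implies finiteness
      intro hfin Y hYcp hYa hxY
      have hx1 := hxY.1
      rw [hfin Y] at hx1
      obtain ⟨F, hF⟩ := Set.mem_iUnion.1 hx1
      obtain ⟨hFY, hxF⟩ := Set.mem_iUnion.1 hF
      have hYF : Y ⊆ F := by
        intro z hz
        obtain ⟨a, ha, hza⟩ := rtIII_find hc habs (hYcp hz) (hxY.2 hz) hxF
        have : z = a := by
          by_contra hne
          exact hYa hz (hFY.1 ha) hne hza
        exact this ▸ ha
      exact hFY.2.subset hYF
    · -- separation
      intro hsep
      have hlub : ∀ Y : Set E, Y ⊆ cpC c Set.univ → IsAntichain (· ≤ ·) Y →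
          x ∈ c Y ∩ upperBounds Y → IsLUB Y x := by
        intro Y hYcp hYa hxY
        refine ⟨hxY.2, ?_⟩
        intro u hu
        by_contra hxu
        obtain ⟨V, hV, huV, hxV⟩ := hsep x u hxu
        have hYV : Y ⊆ V := fun y hy => rtIII_closed_down habs hV (hu hy) huV
        apply hxV
        rw [← hV]
        exact hc.2 hYV hxY.1
      refine ⟨hlub, ?_⟩
      obtain ⟨Y, hYcp, hYa, hxY⟩ := rtIII_exists hc habs hidem hpre hx
      refine ⟨fun y hy => hy.1, ?_⟩
      intro u hu
      exact (hlub Y hYcp hYa hxY).2 (fun y hy => hu ⟨hxY.2 hy, hYcp hy⟩)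
end
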